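/- Let f : ℝ → ℝ be bounded, continuous on ℝ \ {0}, with finite one-sided limits f(0⁺) and f(0⁻). Let D : ℝ → ℝ be continuous, compactly supported, with ∫ D = 1. Define F_σ := f ∗ D_σ where D_σ(x) = σ⁻¹ D(σ⁻¹ x). Then for every continuous compactly supported ψ : ℝ → ℝ, lim_{σ → 0⁺} ∫ F_σ(x)·ψ(x) dx = ∫ f(x)·ψ(x) dx. -/

import Mathlib

/-
With g(s) = ∫ f(x) ψ(x + s) dx, Fubini and the substitution s = σt turn the pairing into
∫ (f ∗ D_σ) ψ = ∫ D(t) g(σt) dt. As f is bounded and locally integrable and ψ is continuous with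
compact support, g is continuous and bounded, so by dominated convergence the right side tends to
g(0) ∫ D = ∫ f ψ.
-/

open MeasureTheory Filter Topology TopologicalSpace
open scoped Convolution

theorem ContinuousOn.aestronglyMeasurable_of_measure_compl_eq_zero {α β : Type*}
    [MeasurableSpace α] [TopologicalSpace α] [OpensMeasurableSpace α] [TopologicalSpace β]
    [SecondCountableTopologyEither α β] [PseudoMetrizableSpace β] {f : α → β} {s : Set α}
    {μ : Measure α} (hf : ContinuousOn f s) (hs : MeasurableSet s) (hμ : μ sᶜ = 0) :
    AEStronglyMeasurable f μ := by
  simpa [Measure.restrict_eq_self_of_ae_mem (mem_ae_iff.2 hμ)] using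
    hf.aestronglyMeasurable (μ := μ) hs

theorem abs_integral_mul_le_of_abs_le {α : Type*} [MeasurableSpace α] {μ : Measure α}
    {f φ : α → ℝ} {C : ℝ} (hf : ∀ x, |f x| ≤ C) (hφ : Integrable φ μ) :
    |∫ x, f x * φ x ∂μ| ≤ C * ∫ x, |φ x| ∂μ := by
  rw [← integral_const_mul C fun x => |φ x|]
  refine norm_integral_le_of_norm_le (f := fun x => f x * φ x) (hφ.abs.const_mul C)
    (.of_forall fun x => ?_)
  rw [Real.norm_eq_abs, abs_mul]
  exact mul_le_mul_of_nonneg_right (hf x) (abs_nonneg _)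

section CrossCorrelation

variable {G : Type*} [AddCommGroup G] [MeasurableSpace G] {μ : Measure G}

noncomputable def crossCorrelation (μ : Measure G) (f ψ : G → ℝ) (s : G) : ℝ :=
  ∫ x, f x * ψ (x + s) ∂μ

theorem abs_crossCorrelation_le [MeasurableAdd G] [μ.IsAddRightInvariant]
    {f ψ : G → ℝ} {C : ℝ} (hf : ∀ x, |f x| ≤ C) (hψ : Integrable ψ μ) (s : G) :
    |crossCorrelation μ f ψ s| ≤ C * ∫ x, |ψ x| ∂μ := by
  rw [← integral_add_right_eq_self (fun x => |ψ x|) s]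
  exact abs_integral_mul_le_of_abs_le hf (hψ.comp_add_right s)

theorem continuous_crossCorrelation [TopologicalSpace G] [IsTopologicalAddGroup G]
    [BorelSpace G] {f ψ : G → ℝ} (hf : LocallyIntegrable f μ) (hψ : Continuous ψ)
    (hψc : HasCompactSupport ψ) :
    Continuous (crossCorrelation μ f ψ) := by
  have hconv : Continuous (f ⋆[ContinuousLinearMap.mul ℝ ℝ, μ] fun y => ψ (-y)) :=
    (hψc.comp_homeomorph (Homeomorph.neg G)).continuous_convolution_right _ hf
      (hψ.comp continuous_neg)
  convert hconv.comp continuous_neg using 1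
  ext s
  simp [crossCorrelation, convolution_def, add_comm]

theorem integral_convolution_mul_eq_integral_mul_crossCorrelation [MeasurableAdd₂ G]
    [MeasurableNeg G] [SFinite μ] [μ.IsAddLeftInvariant] [μ.IsAddRightInvariant] [μ.IsNegInvariant]
    {f K ψ : G → ℝ} {C : ℝ} (hfb : ∀ x, |f x| ≤ C) (hf : AEStronglyMeasurable f μ)
    (hK : Integrable K μ) (hψ : Integrable ψ μ) :
    ∫ x, (f ⋆[ContinuousLinearMap.mul ℝ ℝ, μ] K) x * ψ x ∂μ
      = ∫ s, K s * crossCorrelation μ f ψ s ∂μ := by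
  have hmeas : AEStronglyMeasurable (fun p : G × G => f (p.1 - p.2) * K p.2 * ψ p.1)
      (μ.prod μ) := by
    have hfK := hK.aestronglyMeasurable.convolution_integrand (ContinuousLinearMap.mul ℝ ℝ) hf
    simp only [ContinuousLinearMap.mul_apply', mul_comm (K _)] at hfK
    exact hfK.mul hψ.aestronglyMeasurable.comp_fst
  have hint : Integrable (fun p : G × G => f (p.1 - p.2) * K p.2 * ψ p.1) (μ.prod μ) := by
    refine ((hψ.mul_prod hK).norm.const_mul C).mono' hmeas (.of_forall fun p => ?_)
    simp only [Real.norm_eq_abs, abs_mul]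
    calc |f (p.1 - p.2)| * |K p.2| * |ψ p.1| ≤ C * |K p.2| * |ψ p.1| := by
          gcongr; exact hfb _
      _ = C * (|ψ p.1| * |K p.2|) := by ring
  simp_rw [convolution_mul_swap, ← integral_mul_const]
  rw [integral_integral_swap hint]
  congr 1
  ext s
  have h := integral_sub_right_eq_self (fun x => f x * ψ (x + s)) s (μ := μ)
  simp only [sub_add_cancel] at h
  rw [crossCorrelation, ← h, ← integral_const_mul]
  congr 1
  ext x
  ring

end CrossCorrelation

theorem continuous_integral_mul_comp_smul {E : Type*} [NormedAddCommGroup E] [NormedSpace ℝ E]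
    [MeasurableSpace E] [OpensMeasurableSpace E] {μ : Measure E} {D g : E → ℝ} {M : ℝ}
    (hD : Integrable D μ) (hg : Continuous g) (hgb : ∀ s, |g s| ≤ M) :
    Continuous fun σ : ℝ => ∫ t, D t * g (σ • t) ∂μ := by
  refine continuous_of_dominated (bound := fun t => |D t| * M)
    (fun σ => hD.aestronglyMeasurable.mul
      (hg.comp (continuous_const_smul σ)).aestronglyMeasurable)
    (fun σ => .of_forall fun t => ?_) (hD.abs.mul_const M) (.of_forall fun t => by fun_prop)
  rw [Real.norm_eq_abs, abs_mul]
  exact mul_le_mul_of_nonneg_left (hgb _) (abs_nonneg _)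

theorem integral_dilation_mul {D g : ℝ → ℝ} {σ : ℝ} (hσ : 0 < σ) :
    ∫ s, (1 / σ) * D (s / σ) * g s = ∫ t, D t * g (σ * t) := by
  have := Measure.integral_comp_div (fun t => (1 / σ) * D t * g (σ * t)) σ
  simp only [mul_div_cancel₀ _ hσ.ne'] at this
  simp_rw [mul_assoc] at this ⊢
  rw [this, abs_of_pos hσ, smul_eq_mul, integral_const_mul]
  field_simp

theorem stmt7_general (f : ℝ → ℝ) (C : ℝ) (hfb : ∀ x, |f x| ≤ C)
    (hfc : ContinuousOn f {(0:ℝ)}ᶜ)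
    (D : ℝ → ℝ) (hD : Continuous D) (hDc : HasCompactSupport D)
    (hDi : ∫ x, D x = 1)
    (ψ : ℝ → ℝ) (hψ : Continuous ψ) (hψc : HasCompactSupport ψ) :
    Tendsto
      (fun σ : ℝ => ∫ x, (∫ y, f y * ((1 / σ) * D ((x - y) / σ))) * ψ x)
      (nhdsWithin 0 (Set.Ioi 0)) (nhds (∫ x, f x * ψ x)) := by
  have hf : AEStronglyMeasurable f volume :=
    hfc.aestronglyMeasurable_of_measure_compl_eq_zero isOpen_compl_singleton.measurableSet
      (by simp)
  have hψi : Integrable ψ volume := hψ.integrable_of_hasCompactSupport hψc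
  have hDint : Integrable D volume := hD.integrable_of_hasCompactSupport hDc
  have hg : Continuous (crossCorrelation volume f ψ) :=
    continuous_crossCorrelation
      ((memLp_top_of_bound hf C (.of_forall hfb)).locallyIntegrable le_top) hψ hψc
  have hlim := (continuous_integral_mul_comp_smul hDint hg
    (abs_crossCorrelation_le hfb hψi)).tendsto 0
  have hlim_value :
      ∫ t, D t * crossCorrelation volume f ψ ((0 : ℝ) • t) = ∫ x, f x * ψ x := by
    simp only [zero_smul, integral_mul_const, hDi, one_mul, crossCorrelation, add_zero]
  rw [hlim_value] at hlim
  simp only [smul_eq_mul] at hlim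
  refine (hlim.mono_left nhdsWithin_le_nhds).congr' ?_
  filter_upwards [self_mem_nhdsWithin] with σ hσ
  have hDσ : Integrable (fun s => 1 / σ * D (s / σ)) volume :=
    (hDint.comp_div hσ.ne').const_mul _
  rw [← integral_dilation_mul hσ,
    ← integral_convolution_mul_eq_integral_mul_crossCorrelation hfb hf hDσ hψi]
  rfl

theorem stmt7 (f : ℝ → ℝ) (C : ℝ) (hfb : ∀ x, |f x| ≤ C)
    (hfc : ContinuousOn f {(0:ℝ)}ᶜ)
    (hfp : ∃ a, Tendsto f (nhdsWithin 0 (Set.Ioi 0)) (nhds a))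
    (hfm : ∃ b, Tendsto f (nhdsWithin 0 (Set.Iio 0)) (nhds b))
    (D : ℝ → ℝ) (hD : Continuous D) (hDc : HasCompactSupport D)
    (hDi : ∫ x, D x = 1)
    (ψ : ℝ → ℝ) (hψ : Continuous ψ) (hψc : HasCompactSupport ψ) :
    Tendsto
      (fun σ : ℝ => ∫ x, (∫ y, f y * ((1 / σ) * D ((x - y) / σ))) * ψ x)
      (nhdsWithin 0 (Set.Ioi 0)) (nhds (∫ x, f x * ψ x)) :=
  stmt7_general f C hfb hfc D hD hDc hDi ψ hψ hψc
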